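/- Let G be a graph, X ⊆ V(G), and A ⊆ E(G) with |A| ≥ |E(G)| − 1. Then ι(G_A) ≥ ι(G[X]_A), where G[X]_A denotes the graph obtained from the induced subgraph G[X] by subdividing those edges of G[X] that lie in A. -/

import Mathlib

open SimpleGraph

/-- `v` lies in the closed neighbourhood of the set `D`. -/
def inClosedNbhd {V : Type*} (G : SimpleGraph V) (D : Set V) (v : V) : Prop :=
  ∃ d ∈ D, d = v ∨ G.Adj d v

/-- `D` is an isolating set of `G`: the graph induced on the vertices outside
`N[D]` has no edges. -/
def IsIsolating {V : Type*} (G : SimpleGraph V) (D : Set V) : Prop :=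
  ∀ u v : V, G.Adj u v → inClosedNbhd G D u ∨ inClosedNbhd G D v

/-- The isolation number of a finite graph. -/
noncomputable def iso {V : Type*} (G : SimpleGraph V) [Fintype V] : ℕ :=
  sInf {n | ∃ D : Finset V, D.card = n ∧ IsIsolating G ↑D}

/-- The graph obtained from `G` by subdividing each edge in `A` once; the new
(subdivision) vertices are the elements of `A`. -/
def subdivide {V : Type*} (G : SimpleGraph V) (A : Finset (Sym2 V)) :
    SimpleGraph (V ⊕ {e : Sym2 V // e ∈ A}) where
  Adj x y :=
    match x, y with
    | Sum.inl u, Sum.inl v => G.Adj u v ∧ s(u, v) ∉ A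
    | Sum.inl u, Sum.inr e => u ∈ (e : Sym2 V)
    | Sum.inr e, Sum.inl u => u ∈ (e : Sym2 V)
    | Sum.inr _, Sum.inr _ => False
  symm := by
    refine ⟨?_⟩
    rintro (u | e) (v | f) h <;> dsimp only at h ⊢ <;>
      first
        | exact ⟨h.1.symm, by rw [Sym2.eq_swap]; exact h.2⟩
        | exact h
        | exact h.elim
  loopless := by
    refine ⟨?_⟩
    rintro (u | e) h <;> dsimp only at h <;>
      first
        | exact G.irrefl h.1
        | exact h

/-- A graph is `(ι,q)`-critical. -/
def IotaCritical {V : Type*} (G : SimpleGraph V) [Fintype V] (q : ℕ) : Prop :=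
  (∀ A : Finset (Sym2 V), ↑A ⊆ G.edgeSet → A.card = q →
      iso G < iso (subdivide G A)) ∧
  (∃ A : Finset (Sym2 V), ↑A ⊆ G.edgeSet ∧ A.card = q - 1 ∧
      iso (subdivide G A) = iso G)

/-!
`G[X]_A` embeds into `G_A`, and every vertex of `G_A` outside the image has at most one
neighbour in it: a vertex `v ∉ X` is joined to `X` only through unsubdivided edges, of which
there is at most one, and a subdivision vertex with both ends in `X` lies in the image. So an
isolating set of `G_A` yields one of `G[X]_A` of at most the same size, by pulling back the
vertices in the image and replacing every other vertex by its unique neighbour in the image.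
-/

open Finset

section Isolation

variable {V W : Type*} [Fintype V] [Fintype W] {G : SimpleGraph V} {H : SimpleGraph W}

lemma iso_le_card {D : Finset V} (hD : IsIsolating G D) : iso G ≤ D.card :=
  Nat.sInf_le ⟨D, rfl, hD⟩

lemma exists_isIsolating_card_eq_iso (G : SimpleGraph V) :
    ∃ D : Finset V, D.card = iso G ∧ IsIsolating G D :=
  Nat.sInf_mem (s := {n | ∃ D : Finset V, D.card = n ∧ IsIsolating G ↑D})
    ⟨_, univ, rfl, fun u _ _ => Or.inl ⟨u, mem_coe.2 (mem_univ u), Or.inl rfl⟩⟩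

theorem iso_le_iso_of_embedding (f : H ↪g G)
    (hf : ∀ v ∉ Set.range f, ∀ z z', G.Adj v (f z) → G.Adj v (f z') → z = z') :
    iso H ≤ iso G := by
  classical
  obtain ⟨D, hDcard, hD⟩ := exists_isIsolating_card_eq_iso G
  let P : V → W → Prop := fun d z => d = f z ∨ (d ∉ Set.range f ∧ G.Adj d (f z))
  have hP : ∀ d, (univ.filter (P d)).card ≤ 1 := by
    refine fun d => card_le_one.2 fun z hz z' hz' => ?_
    simp only [mem_filter, mem_univ, true_and, P] at hz hz'
    rcases hz with rfl | ⟨hd, hz⟩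
    · rcases hz' with h | ⟨hd, -⟩
      · exact f.injective h
      · exact absurd ⟨z, rfl⟩ hd
    · rcases hz' with rfl | ⟨-, hz'⟩
      · exact absurd ⟨z', rfl⟩ hd
      · exact hf d hd z z' hz hz'
  have hcover : ∀ d z, (d = f z ∨ G.Adj d (f z)) → ∃ y, P d y ∧ (y = z ∨ H.Adj y z) := by
    intro d z hdz
    by_cases hd : d ∈ Set.range f
    · obtain ⟨y, rfl⟩ := hd
      exact ⟨y, Or.inl rfl, hdz.imp (fun h => f.injective h) f.map_adj_iff.1⟩
    · exact ⟨z, Or.inr ⟨hd, hdz.resolve_left fun h => hd ⟨z, h.symm⟩⟩, Or.inl rfl⟩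
  calc iso H ≤ (D.biUnion fun d => univ.filter (P d)).card := iso_le_card ?_
    _ ≤ ∑ d ∈ D, (univ.filter (P d)).card := card_biUnion_le
    _ ≤ ∑ _d ∈ D, 1 := sum_le_sum fun d _ => hP d
    _ = iso G := by simp [hDcard]
  intro u w huw
  refine (hD _ _ (f.map_adj_iff.2 huw)).imp ?_ ?_ <;>
  · rintro ⟨d, hdD, hdz⟩
    obtain ⟨y, hPy, hy⟩ := hcover d _ hdz
    exact ⟨y, by simpa using ⟨d, hdD, hPy⟩, hy⟩

end Isolation

section Subdivision

variable {V : Type*} (G : SimpleGraph V) (A : Finset (Sym2 V))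

@[simp] lemma subdivide_adj_inl_inl {u v : V} :
    (subdivide G A).Adj (.inl u) (.inl v) ↔ G.Adj u v ∧ s(u, v) ∉ A := Iff.rfl

@[simp] lemma subdivide_adj_inl_inr {u : V} {e : {e // e ∈ A}} :
    (subdivide G A).Adj (.inl u) (.inr e) ↔ u ∈ (e : Sym2 V) := Iff.rfl

@[simp] lemma subdivide_adj_inr_inl {u : V} {e : {e // e ∈ A}} :
    (subdivide G A).Adj (.inr e) (.inl u) ↔ u ∈ (e : Sym2 V) := Iff.rfl

@[simp] lemma subdivide_not_adj_inr_inr {e e' : {e // e ∈ A}} :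
    ¬(subdivide G A).Adj (.inr e) (.inr e') := id

lemma edgeSet_sdiff_subsingleton [Fintype V] [DecidableEq V] [DecidableRel G.Adj]
    (hA : ↑A ⊆ G.edgeSet) (hcard : G.edgeFinset.card - 1 ≤ A.card) :
    (G.edgeSet \ ↑A).Subsingleton := by
  have hsub : A ⊆ G.edgeFinset := fun e he => mem_edgeFinset.2 (hA he)
  have hle : (G.edgeFinset \ A).card ≤ 1 := by
    rw [card_sdiff_of_subset hsub]; omega
  intro e he e' he'
  exact card_le_one.1 hle e (by simpa using he) e' (by simpa using he')

end Subdivision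

section Induce

variable {V : Type*} [DecidableEq V] (G : SimpleGraph V) (A : Finset (Sym2 V))
  (X : Set V) [Fintype X]

def restrictEdges : Finset (Sym2 X) :=
  univ.filter fun e : Sym2 X => Sym2.map Subtype.val e ∈ A

@[simp] lemma mem_restrictEdges {e : Sym2 X} :
    e ∈ restrictEdges A X ↔ Sym2.map Subtype.val e ∈ A := by
  simp [restrictEdges]

def subdivideInduceEmbedding :
    subdivide (G.induce X) (restrictEdges A X) ↪g subdivide G A where
  toFun := Sum.map Subtype.val fun e => ⟨Sym2.map Subtype.val e, (mem_restrictEdges A X).1 e.2⟩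
  inj' := Sum.map_injective.2 ⟨Subtype.val_injective, fun e e' h =>
    Subtype.ext (Sym2.map.injective Subtype.val_injective (congrArg Subtype.val h))⟩
  map_rel_iff' := by
    rintro (u | e) (v | e') <;> simp [Sym2.map_mk, Sym2.mem_map]

variable {G A X}

@[simp] lemma subdivideInduceEmbedding_inl (x : X) :
    subdivideInduceEmbedding G A X (.inl x) = .inl ↑x := rfl

@[simp] lemma subdivideInduceEmbedding_inr (e : {e // e ∈ restrictEdges A X}) :
    subdivideInduceEmbedding G A X (.inr e) =
      .inr ⟨Sym2.map Subtype.val e, (mem_restrictEdges A X).1 e.2⟩ := rfl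

lemma not_adj_subdivideInduceEmbedding_inr {d : V ⊕ {e // e ∈ A}}
    (hd : d ∉ Set.range (subdivideInduceEmbedding G A X)) (e : {e // e ∈ restrictEdges A X}) :
    ¬(subdivide G A).Adj d (subdivideInduceEmbedding G A X (.inr e)) := by
  rcases d with v | e'
  · intro h
    obtain ⟨a, -, rfl⟩ := Sym2.mem_map.1 h
    exact hd ⟨.inl a, rfl⟩
  · exact id

lemma eq_of_adj_subdivideInduceEmbedding (h : (G.edgeSet \ ↑A).Subsingleton)
    {d : V ⊕ {e // e ∈ A}} (hd : d ∉ Set.range (subdivideInduceEmbedding G A X))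
    {z z' : X ⊕ {e // e ∈ restrictEdges A X}}
    (hz : (subdivide G A).Adj d (subdivideInduceEmbedding G A X z))
    (hz' : (subdivide G A).Adj d (subdivideInduceEmbedding G A X z')) : z = z' := by
  rcases z with x | e
  swap
  · exact absurd hz (not_adj_subdivideInduceEmbedding_inr hd e)
  rcases z' with y | e'
  swap
  · exact absurd hz' (not_adj_subdivideInduceEmbedding_inr hd e')
  congr 1
  rcases d with v | ⟨e, he⟩
  · simp only [subdivideInduceEmbedding_inl, subdivide_adj_inl_inl] at hz hz'
    exact Subtype.ext (Sym2.congr_right.1 (h ⟨hz.1, hz.2⟩ ⟨hz'.1, hz'.2⟩))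
  · simp only [subdivideInduceEmbedding_inl, subdivide_adj_inr_inl] at hz hz'
    by_contra hxy
    have he_eq : e = Sym2.map Subtype.val s(x, y) := by
      rw [Sym2.map_mk]
      exact (Sym2.mem_and_mem_iff (Subtype.coe_ne_coe.2 hxy)).1 ⟨hz, hz'⟩
    exact hd ⟨.inr ⟨s(x, y), by simpa [← he_eq]⟩, by simp [he_eq]⟩

end Induce

theorem stmt9 {V : Type*} [Fintype V] [DecidableEq V] (G : SimpleGraph V)
    [DecidableRel G.Adj] (X : Set V) [DecidablePred (· ∈ X)]
    (A : Finset (Sym2 V)) (hA : ↑A ⊆ G.edgeSet)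
    (hcard : G.edgeFinset.card - 1 ≤ A.card) :
    iso (subdivide (G.induce X)
      (Finset.univ.filter (fun e : Sym2 X => Sym2.map Subtype.val e ∈ A)))
      ≤ iso (subdivide G A) := by
  exact iso_le_iso_of_embedding (subdivideInduceEmbedding G A X) fun _ hd _ _ =>
    eq_of_adj_subdivideInduceEmbedding (edgeSet_sdiff_subsingleton G A hA hcard) hd
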